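/- Let 0 ≤ r ≤ m−1 and let A(z) = Σ_{s : wt(s̄) ≤ r} A_s z^s be a polynomial over F = GF(2^m) whose coefficients satisfy the conjugacy constraint A_{2s mod n} = A_s^2. Then there exist coefficients u_V ∈ F_2, indexed by subsets V ⊆ {0,…,m−1} with |V| ≤ r, such that for all (z_0,…,z_{m−1}) ∈ F_2^m: A(Σ_{i=0}^{m−1} z_i α^i) = Σ_{V ⊆ {0,…,m−1}, |V| ≤ r} u_V Π_{i∈V} z_i. That is, the evaluation of A on F is the evaluation of an m-variate Boolean polynomial of total degree at most r. -/

import Mathlib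

/-- Hamming weight of the `m`-bit binary expansion of `s`. -/
def wtm (m s : ℕ) : ℕ := ((Finset.range m).filter fun j => s.testBit j).card

/-!
For `W ⊆ {0,…,m-1}` put `f W = A(∑_{i∈W} αⁱ)`. In characteristic 2 the Möbius transform
`u V = ∑_{W ⊆ V} f W` of the subset lattice is its own inverse, so `f T = ∑_{V ⊆ T} u V`: this is
the Boolean polynomial with coefficients `u V` evaluated at the indicator vector of `T`.

The values of `A` are idempotent, because squaring `∑ A_s y^s` replaces `s` by `2s mod (2^m - 1)`,
a cyclic shift of the `m` bits of `s`, which permutes the exponents of weight at most `r`; hence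
`u V ∈ {0, 1}`. For the degree bound, the Frobenius map writes `(∑_{i∈W} αⁱ)^s` as a product of
`wt(s)` functions additive in `W`, and summing such a product over all `W ⊆ V` vanishes once
`|V| > wt(s)`, since every monomial is then counted an even number of times.
-/

open Finset

theorem Nat.sum_two_pow_testBit {m s : ℕ} (hs : s < 2 ^ m) :
    ∑ j ∈ (range m).filter fun j => s.testBit j, 2 ^ j = s := by
  have hbits : ((range m).filter fun j => s.testBit j) = s.bitIndices.toFinset := by
    ext j
    simp only [mem_filter, mem_range, List.mem_toFinset, Nat.mem_bitIndices, and_iff_right_iff_imp]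
    intro hj
    by_contra! hmj
    rw [Nat.testBit_lt_two_pow (hs.trans_le (Nat.pow_le_pow_right two_pos hmj))] at hj
    exact Bool.false_ne_true hj
  rw [hbits, sum_toFinset_bitIndices_two_pow]

theorem pow_eq_prod_pow_two_pow_testBit {M : Type*} [CommMonoid M] (y : M) {m s : ℕ}
    (hs : s < 2 ^ m) : y ^ s = ∏ j ∈ (range m).filter fun j => s.testBit j, y ^ 2 ^ j := by
  rw [prod_pow_eq_pow_sum, Nat.sum_two_pow_testBit hs]

-- Doubling modulo `2 ^ (k + 1) - 1` rotates the `k + 1` bits of `s` cyclically.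
theorem two_mul_mod_two_pow_sub_one {k s : ℕ} (hs : s < 2 ^ (k + 1) - 1) :
    2 * s % (2 ^ (k + 1) - 1) = 2 * (s % 2 ^ k) + s / 2 ^ k := by
  have hdiv := Nat.div_add_mod s (2 ^ k)
  have hlt := Nat.mod_lt s (Nat.two_pow_pos k)
  have hpow : 2 ^ (k + 1) = 2 * 2 ^ k := by ring
  have hbit : s / 2 ^ k = 0 ∨ s / 2 ^ k = 1 := by
    have : s / 2 ^ k < 2 := Nat.div_lt_of_lt_mul (by omega)
    exact Nat.le_one_iff_eq_zero_or_eq_one.1 (Nat.lt_succ_iff.1 this)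
  rcases hbit with h | h
  · rw [h, mul_zero, zero_add] at hdiv
    rw [h, Nat.mod_eq_of_lt (by omega)]
    omega
  · rw [h, mul_one] at hdiv
    rw [h, Nat.mod_eq_sub_mod (by omega), Nat.mod_eq_of_lt (by omega)]
    omega

theorem wtm_two_mul_mod {m s : ℕ} (hs : s < 2 ^ m - 1) :
    wtm m (2 * s % (2 ^ m - 1)) = wtm m s := by
  obtain ⟨k, rfl⟩ : ∃ k, m = k + 1 :=
    Nat.exists_eq_add_one.2 (Nat.pos_of_ne_zero (by rintro rfl; simp at hs))
  have hhigh : s / 2 ^ k < 2 ^ 1 := Nat.div_lt_of_lt_mul (by rw [← pow_add]; omega)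
  have hbit := Nat.testBit_two_pow_mul_add (s % 2 ^ k) hhigh
  rw [pow_one] at hbit
  rw [two_mul_mod_two_pow_sub_one hs, wtm, wtm, card_filter, card_filter, sum_range_succ',
    sum_range_succ]
  congr 1
  · refine sum_congr rfl fun j hj => ?_
    rw [hbit, if_neg (by omega : ¬ j + 1 < 1), Nat.add_sub_cancel, Nat.testBit_mod_two_pow,
      decide_eq_true (mem_range.1 hj), Bool.true_and]
  · rw [hbit, if_pos zero_lt_one, Nat.testBit_div_two_pow, zero_add]

theorem Nat.injOn_two_mul_mod {n : ℕ} (hn : Odd n) :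
    Set.InjOn (fun s => 2 * s % n) (range n) := by
  intro a ha b hb hab
  have hcop : Nat.gcd n 2 = 1 := Nat.coprime_two_right.2 hn
  have := Nat.ModEq.cancel_left_of_coprime hcop hab
  rwa [Nat.ModEq, Nat.mod_eq_of_lt (mem_range.1 ha), Nat.mod_eq_of_lt (mem_range.1 hb)] at this

namespace FiniteField

variable {K : Type*} [Field K] [Fintype K] {q : ℕ}

theorem odd_card_sub_one [CharP K 2] (hq : Fintype.card K = q) : Odd (q - 1) := by
  obtain ⟨c, hc⟩ := (CharP.cast_eq_zero_iff K 2 q).1 (hq ▸ Nat.cast_card_eq_zero K)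
  have : 0 < q := hq ▸ Fintype.card_pos
  exact ⟨c - 1, by omega⟩

theorem pow_mod_card_sub_one (hq : Fintype.card K = q) (y : K) {k : ℕ}
    (hk : k % (q - 1) = 0 → k = 0) : y ^ (k % (q - 1)) = y ^ k := by
  subst hq
  by_cases hy : y = 0
  · rcases eq_or_ne k 0 with rfl | hk0
    · simp
    · rw [hy, zero_pow hk0, zero_pow (mt hk hk0)]
  · conv_rhs => rw [← Nat.div_add_mod k (Fintype.card K - 1), pow_add, pow_mul,
      pow_card_sub_one_eq_one y hy, one_pow, one_mul]

theorem sum_mul_pow_sq_eq_self [CharP K 2] (hq : Fintype.card K = q) (A : ℕ → K)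
    {S : Finset ℕ} (hS : S ⊆ range (q - 1)) (hmaps : ∀ s ∈ S, 2 * s % (q - 1) ∈ S)
    (hA : ∀ s ∈ S, A (2 * s % (q - 1)) = A s ^ 2) (y : K) :
    (∑ s ∈ S, A s * y ^ s) ^ 2 = ∑ s ∈ S, A s * y ^ s := by
  have hodd := odd_card_sub_one hq
  have hinj : Set.InjOn (fun s => 2 * s % (q - 1)) S :=
    (Nat.injOn_two_mul_mod hodd).mono (coe_subset.2 hS)
  calc (∑ s ∈ S, A s * y ^ s) ^ 2
      = ∑ s ∈ S, A (2 * s % (q - 1)) * y ^ (2 * s % (q - 1)) := by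
        rw [sum_pow_char]
        refine sum_congr rfl fun s hs => ?_
        rw [mul_pow, hA s hs, ← pow_mul, mul_comm s 2, pow_mod_card_sub_one hq]
        intro h
        rw [← Nat.zero_mod (q - 1), ← mul_zero 2] at h
        rw [Nat.injOn_two_mul_mod hodd (hS hs) (mem_range.2 hodd.pos) h, mul_zero]
    _ = ∑ s ∈ S, A s * y ^ s :=
        sum_nbij _ hmaps hinj (surjOn_of_injOn_of_card_le _ hmaps hinj le_rfl) fun _ _ => rfl

end FiniteField

def moebiusTransform {β M : Type*} [AddCommMonoid M] (f : Finset β → M) (V : Finset β) : M :=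
  ∑ W ∈ V.powerset, f W

theorem sum_powerset_eq_sum_mul_prod_boole {β R : Type*} [Fintype β] [DecidableEq β]
    [CommSemiring R] (g : Finset β → R) (T : Finset β) :
    ∑ V ∈ T.powerset, g V = ∑ V, g V * ∏ i ∈ V, if i ∈ T then 1 else 0 := by
  simp only [prod_boole, mul_boole, ← sum_filter, ← subset_iff]
  congr 1
  ext V
  simp

namespace CharTwo

variable {R : Type*} [CommRing R] [CharP R 2] {β : Type*}

theorem moebiusTransform_sq_eq_self {f : Finset β → R} (hf : ∀ W, f W ^ 2 = f W)
    (V : Finset β) : moebiusTransform f V ^ 2 = moebiusTransform f V := by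
  simp only [moebiusTransform, sum_pow_char, hf]

variable [DecidableEq β]

theorem sum_Icc_const {s t : Finset β} (hst : s ⊆ t) (x : R) :
    ∑ _w ∈ Icc s t, x = if s = t then x else 0 := by
  split_ifs with h
  · simp [h]
  · have hcard : 0 < #t - #s := Nat.sub_pos_of_lt (card_lt_card (ssubset_of_subset_of_ne hst h))
    rw [sum_const, card_Icc_finset hst, nsmul_eq_mul, Nat.cast_pow, Nat.cast_ofNat, two_eq_zero,
      zero_pow hcard.ne', zero_mul]

theorem sum_powerset_moebiusTransform (f : Finset β → R) (T : Finset β) :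
    ∑ V ∈ T.powerset, moebiusTransform f V = f T := by
  unfold moebiusTransform
  rw [sum_comm' (t' := T.powerset) (s' := fun W => Icc W T) (by intro V W; simp; tauto)]
  rw [sum_congr rfl fun W hW => sum_Icc_const (mem_powerset.1 hW) (f W), sum_ite_eq',
    if_pos (mem_powerset_self T)]

theorem moebiusTransform_prod_sum_eq_zero {ι : Type*} [Fintype ι] (c : ι → β → R)
    {V : Finset β} (hV : Fintype.card ι < #V) :
    moebiusTransform (fun W => ∏ j, ∑ i ∈ W, c j i) V = 0 := by
  classical
  -- after expanding the product, the term of `φ : ι → V` is counted `2 ^ #(V \ range φ)` times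
  simp_rw [moebiusTransform, prod_univ_sum]
  rw [sum_comm' (t' := Fintype.piFinset fun _ => V) (s' := fun φ => Icc (univ.image φ) V)
    (by intro W φ; simp [Fintype.mem_piFinset, image_subset_iff]; grind)]
  refine sum_eq_zero fun φ hφ => ?_
  have himage : univ.image φ ⊆ V := image_subset_iff.2 fun j _ => Fintype.mem_piFinset.1 hφ j
  rw [sum_Icc_const himage, if_neg]
  intro h
  have := card_image_le (s := univ) (f := φ)
  rw [h, card_univ] at this
  omega

theorem moebiusTransform_sum_pow_eq_zero (x : β → R) {m s : ℕ} (hs : s < 2 ^ m)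
    {V : Finset β} (hV : wtm m s < #V) :
    moebiusTransform (fun W => (∑ i ∈ W, x i) ^ s) V = 0 := by
  simp_rw [pow_eq_prod_pow_two_pow_testBit _ hs, sum_pow_char_pow]
  set B := (range m).filter fun j => s.testBit j
  simp_rw [← prod_coe_sort B]
  exact moebiusTransform_prod_sum_eq_zero (fun (j : B) i => x i ^ 2 ^ (j : ℕ))
    (by rw [Fintype.card_coe]; exact hV)

end CharTwo

theorem two_mul_mod_mem_filter_wtm_le {m r s : ℕ}
    (hs : s ∈ (range (2 ^ m - 1)).filter fun s => wtm m s ≤ r) :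
    2 * s % (2 ^ m - 1) ∈ (range (2 ^ m - 1)).filter fun s => wtm m s ≤ r := by
  obtain ⟨hsn, hsr⟩ := mem_filter.1 hs
  exact mem_filter.2 ⟨mem_range.2 (Nat.mod_lt _ (Nat.zero_lt_of_lt (mem_range.1 hsn))),
    by rwa [wtm_two_mul_mod (mem_range.1 hsn)]⟩

theorem MS_polynomial_as_boolean_polynomial_general (m : ℕ)
    {F : Type*} [Field F] [Fintype F] (hF : Fintype.card F = 2 ^ m)
    (α : F)
    (r : ℕ)
    (A : ℕ → F)
    (hconj : ∀ s, s < 2 ^ m - 1 → wtm m s ≤ r →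
      A (2 * s % (2 ^ m - 1)) = A s ^ 2) :
    ∃ u : Finset (Fin m) → F,
      (∀ V, u V = 0 ∨ u V = 1) ∧
      ∀ z : Fin m → F, (∀ i, z i = 0 ∨ z i = 1) →
        ∑ s ∈ (Finset.range (2 ^ m - 1)).filter (fun s => wtm m s ≤ r),
            A s * (∑ i : Fin m, z i * α ^ (i : ℕ)) ^ s
          = ∑ V ∈ Finset.univ.filter (fun V : Finset (Fin m) => V.card ≤ r),
              u V * ∏ i ∈ V, z i := by
  classical
  have : CharP F 2 := charP_of_card_eq_prime_pow hF
  set S := (range (2 ^ m - 1)).filter fun s => wtm m s ≤ r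
  set f : Finset (Fin m) → F := fun W => ∑ s ∈ S, A s * (∑ i ∈ W, α ^ (i : ℕ)) ^ s
  have hf : ∀ W, f W ^ 2 = f W := fun W =>
    FiniteField.sum_mul_pow_sq_eq_self hF A (filter_subset _ _)
      (fun _ => two_mul_mod_mem_filter_wtm_le)
      (fun s hs => hconj s (mem_range.1 (mem_filter.1 hs).1) (mem_filter.1 hs).2) _
  have hdeg : ∀ V, r < #V → moebiusTransform f V = 0 := fun V hV => by
    rw [moebiusTransform, sum_comm]
    refine sum_eq_zero fun s hs => ?_
    obtain ⟨hsn, hsr⟩ := mem_filter.1 hs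
    rw [← mul_sum, ← moebiusTransform, CharTwo.moebiusTransform_sum_pow_eq_zero _
      ((mem_range.1 hsn).trans_le (Nat.sub_le _ _)) (hsr.trans_lt hV), mul_zero]
  refine ⟨moebiusTransform f, fun V => IsIdempotentElem.iff_eq_zero_or_one.1
    ((sq _).symm.trans (CharTwo.moebiusTransform_sq_eq_self hf V)), fun z hz => ?_⟩
  obtain ⟨T, rfl⟩ : ∃ T : Finset (Fin m), z = fun i => if i ∈ T then 1 else 0 :=
    ⟨univ.filter (z · = 1), funext fun i => by rcases hz i with h | h <;> simp [h]⟩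
  calc ∑ s ∈ S, A s * (∑ i, (if i ∈ T then 1 else 0) * α ^ (i : ℕ)) ^ s
      = f T := by simp [f]
    _ = ∑ V ∈ T.powerset, moebiusTransform f V := (CharTwo.sum_powerset_moebiusTransform f T).symm
    _ = ∑ V, moebiusTransform f V * ∏ i ∈ V, if i ∈ T then 1 else 0 :=
        sum_powerset_eq_sum_mul_prod_boole _ T
    _ = _ := (sum_filter_of_ne fun V _ hV =>
        not_lt.1 (mt (hdeg V) (left_ne_zero_of_mul hV))).symm

/-- Let `0 ≤ r ≤ m-1` and let `A(z) = ∑_{s : wt(s̄) ≤ r} A_s z^s` be a polynomial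
over `F = GF(2^m)` (with primitive element `α`, so that `{α^0,…,α^{m-1}}` is an
`F₂`-basis of `F`) whose coefficients satisfy the conjugacy constraint
`A_{2s mod n} = A_s²` where `n = 2^m - 1`.  Then there exist coefficients
`u_V ∈ F₂` (identified with `{0,1} ⊆ F`), indexed by subsets `V ⊆ {0,…,m-1}` with
`|V| ≤ r`, such that for all `(z_0,…,z_{m-1}) ∈ F₂^m`:
`A(∑ᵢ z_i α^i) = ∑_{V, |V| ≤ r} u_V ∏_{i∈V} z_i`; that is, the evaluation of `A`
on `F` is the evaluation of an `m`-variate Boolean polynomial of total degree at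
most `r`. -/
theorem MS_polynomial_as_boolean_polynomial (m : ℕ) (hm : 0 < m)
    {F : Type*} [Field F] [Fintype F] (hF : Fintype.card F = 2 ^ m)
    (α : F) (hα : orderOf α = 2 ^ m - 1)
    (r : ℕ) (hr : r < m)
    (A : ℕ → F)
    (hconj : ∀ s, s < 2 ^ m - 1 → wtm m s ≤ r →
      A (2 * s % (2 ^ m - 1)) = A s ^ 2) :
    ∃ u : Finset (Fin m) → F,
      (∀ V, u V = 0 ∨ u V = 1) ∧
      ∀ z : Fin m → F, (∀ i, z i = 0 ∨ z i = 1) →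
        ∑ s ∈ (Finset.range (2 ^ m - 1)).filter (fun s => wtm m s ≤ r),
            A s * (∑ i : Fin m, z i * α ^ (i : ℕ)) ^ s
          = ∑ V ∈ Finset.univ.filter (fun V : Finset (Fin m) => V.card ≤ r),
              u V * ∏ i ∈ V, z i :=
  MS_polynomial_as_boolean_polynomial_general m hF α r A hconj
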